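/- arXiv:1805.01583 — 6 statements merged into one kernel-verified Lean document; each statement's English description precedes it below -/
import Mathlib

section
/- Let f : 2^V → ℝ be submodular with f(∅)=0 and w ∈ ℝ_{>0}^V. For λ < λ', the maximal minimizer of X ↦ f(X) − λ w(X) is contained in every minimizer of X ↦ f(X) − λ' w(X); in particular, the maximal minimizers form a nested (monotone nondecreasing) chain as λ increases. -/
open Finset

/-- `X` minimizes `F` over all subsets of `V`. -/
def IsMinimizer {V : Type*} [Fintype V] (F : Finset V → ℝ) (X : Finset V) : Prop :=
  ∀ Z : Finset V, F X ≤ F Z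

/-- For `λ < λ'`, the maximal minimizer of `X ↦ f(X) − λ w(X)` is contained
in every minimizer of `X ↦ f(X) − λ' w(X)`; hence maximal minimizers form a nested chain
as `λ` increases. -/
theorem maximal_minimizers_nested
    {V : Type*} [Fintype V] [DecidableEq V] [Nonempty V]
    (f : Finset V → ℝ) (hf0 : f ∅ = 0)
    (hsub : ∀ X Y : Finset V, f (X ∪ Y) + f (X ∩ Y) ≤ f X + f Y)
    (w : V → ℝ) (hw : ∀ i, 0 < w i)
    (lam lam' : ℝ) (hlt : lam < lam')
    (M : Finset V)
    (hMmin : IsMinimizer (fun X => f X - lam * ∑ i ∈ X, w i) M)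
    (hMmax : ∀ X, IsMinimizer (fun X => f X - lam * ∑ i ∈ X, w i) X → X ⊆ M)
    (Y : Finset V)
    (hY : IsMinimizer (fun X => f X - lam' * ∑ i ∈ X, w i) Y) :
    M ⊆ Y := by
  by_contra hMY
  have hne : (M \ Y).Nonempty := by rwa [Finset.sdiff_nonempty]
  have hwpos : 0 < ∑ i ∈ M \ Y, w i := Finset.sum_pos (fun i _ => hw i) hne
  have h1 := hMmin (M ∩ Y)
  have h2 := hY (M ∪ Y)
  have h3 := hsub M Y
  have hsumM : ∑ i ∈ M, w i = (∑ i ∈ M ∩ Y, w i) + ∑ i ∈ M \ Y, w i :=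
    (Finset.sum_inter_add_sum_sdiff M Y w).symm
  have hsumU : ∑ i ∈ M ∪ Y, w i = (∑ i ∈ Y, w i) + ∑ i ∈ M \ Y, w i := by
    have := Finset.sum_inter_add_sum_sdiff (M ∪ Y) Y w
    rw [Finset.union_inter_cancel_right, Finset.union_sdiff_right] at this
    linarith
  simp only at h1 h2
  have e1 : lam * (∑ i ∈ M, w i) =
      lam * (∑ i ∈ M ∩ Y, w i) + lam * (∑ i ∈ M \ Y, w i) := by rw [hsumM]; ring
  have e2 : lam' * (∑ i ∈ M ∪ Y, w i) =
      lam' * (∑ i ∈ Y, w i) + lam' * (∑ i ∈ M \ Y, w i) := by rw [hsumU]; ring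
  have key : lam * (∑ i ∈ M \ Y, w i) < lam' * (∑ i ∈ M \ Y, w i) :=
    mul_lt_mul_of_pos_right hlt hwpos
  linarith
end

section
/- Let f : 2^V → ℝ be submodular with f(∅)=0, w ∈ ℝ_{>0}^V, and λ = f(V)/w(V). If V is a minimizer of X ↦ f(X) − λ w(X) over X ⊆ V, then r = λ w is the unique minimizer of Σ_{i∈V} r_i²/w_i over the base polyhedron B(f) = { r : r(X) ≤ f(X) ∀X, r(V) = f(V) }. -/
open Finset

/-- With `λ = f(V)/w(V)`, if `V` is a minimizer of `X ↦ f(X) − λ w(X)`,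
then `r = λ w` is the unique minimizer of `∑ i, r i ^ 2 / w i` over the base
polyhedron `B(f)`. -/
theorem lambda_w_unique_quadratic_minimizer
    {V : Type*} [Fintype V] [DecidableEq V] [Nonempty V]
    (f : Finset V → ℝ) (hf0 : f ∅ = 0)
    (hsub : ∀ X Y : Finset V, f (X ∪ Y) + f (X ∩ Y) ≤ f X + f Y)
    (w : V → ℝ) (hw : ∀ i, 0 < w i)
    (lam : ℝ) (hlam : lam = f Finset.univ / ∑ i, w i)
    (hmin : ∀ X : Finset V,
      f Finset.univ - lam * ∑ i, w i ≤ f X - lam * ∑ i ∈ X, w i) :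
    ((∀ X : Finset V, ∑ i ∈ X, lam * w i ≤ f X) ∧
        ∑ i, lam * w i = f Finset.univ) ∧
    ∀ s : V → ℝ,
      ((∀ X : Finset V, ∑ i ∈ X, s i ≤ f X) ∧ ∑ i, s i = f Finset.univ) →
      s ≠ (fun i => lam * w i) →
      ∑ i, (lam * w i) ^ 2 / w i < ∑ i, (s i) ^ 2 / w i := by
  have hwV : 0 < ∑ i, w i :=
    Finset.sum_pos (fun i _ => hw i) Finset.univ_nonempty
  have hlamw : lam * ∑ i, w i = f Finset.univ := by
    rw [hlam]; field_simp
  have hfeas : ∀ X : Finset V, ∑ i ∈ X, lam * w i ≤ f X := by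
    intro X
    have h := hmin X
    rw [← Finset.mul_sum]
    linarith
  have hsum : ∑ i, lam * w i = f Finset.univ := by
    rw [← Finset.mul_sum]; exact hlamw
  refine ⟨⟨hfeas, hsum⟩, ?_⟩
  rintro s ⟨hs1, hs2⟩ hne
  obtain ⟨j, hj⟩ : ∃ j, s j ≠ lam * w j := by
    by_contra h
    push_neg at h
    exact hne (funext h)
  have key : ∑ i, (2 * lam * s i - lam ^ 2 * w i) < ∑ i, (s i) ^ 2 / w i := by
    refine Finset.sum_lt_sum (fun i _ => ?_) ⟨j, Finset.mem_univ j, ?_⟩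
    · rw [le_div_iff₀ (hw i)]
      nlinarith [sq_nonneg (s i - lam * w i), hw i]
    · rw [lt_div_iff₀ (hw j)]
      nlinarith [sq_nonneg (s j - lam * w j), hw j, sq_pos_of_ne_zero (sub_ne_zero.mpr hj)]
  have hL : ∑ i, (lam * w i) ^ 2 / w i = lam ^ 2 * ∑ i, w i := by
    rw [Finset.mul_sum]
    refine Finset.sum_congr rfl fun i _ => ?_
    rw [mul_pow, pow_two (w i), mul_div_assoc, mul_div_cancel_left₀ _ (hw i).ne']
  have hR : ∑ i, (2 * lam * s i - lam ^ 2 * w i)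
      = 2 * lam * f Finset.univ - lam ^ 2 * ∑ i, w i := by
    rw [Finset.sum_sub_distrib, ← Finset.mul_sum, ← Finset.mul_sum, hs2]
  have : lam ^ 2 * ∑ i, w i = lam * f Finset.univ := by
    rw [← hlamw]; ring
  rw [hL]
  calc lam ^ 2 * ∑ i, w i = 2 * lam * f Finset.univ - lam ^ 2 * ∑ i, w i := by
        rw [this]; linarith [this]
    _ = ∑ i, (2 * lam * s i - lam ^ 2 * w i) := hR.symm
    _ < _ := key
end

section
/- Let f : 2^V → ℝ be submodular with f(∅)=0 and S a nonempty proper subset of V. With g and λ, λ' as above, X ⊆ V∖S minimizes g(X) − λ' w(X) over subsets of V∖S if and only if X ∪ S minimizes f(Y) − λ w(Y) over subsets Y ⊆ V containing S. -/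
open Finset

/-!
Writing `w(Y)` for `∑ i ∈ Y, w i`, the slopes satisfy `λ' = λ - f(S)/w(S)`, and with this value
the objective `g(Z) - λ' w(Z)` is `f(Z ∪ S) - λ w(Z ∪ S)` shifted by the constant `λ w(S) - f(S)`.
Since `Z ↦ Z ∪ S` is a bijection from the subsets of `V ∖ S` onto the subsets of `V` containing
`S`, the two minimization problems have corresponding minimizers.
-/

section Contraction

variable {V : Type*} [Fintype V] [DecidableEq V]

theorem forall_le_contraction_iff {β : Type*} [AddCommGroup β] [PartialOrder β]
    [IsOrderedAddMonoid β] {φ ψ : Finset V → β} {S X : Finset V} (c : β)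
    (h : ∀ Z ⊆ univ \ S, φ Z = ψ (Z ∪ S) + c) (hX : X ⊆ univ \ S) :
    (∀ Z ⊆ univ \ S, φ X ≤ φ Z) ↔ ∀ Y, S ⊆ Y → ψ (X ∪ S) ≤ ψ Y := by
  constructor
  · intro hmin Y hSY
    have hYS : Y \ S ⊆ univ \ S := sdiff_subset_sdiff (subset_univ Y) le_rfl
    simpa [h X hX, h _ hYS, sdiff_union_of_subset hSY] using hmin _ hYS
  · intro hmin Z hZ
    simpa [h X hX, h Z hZ] using hmin (Z ∪ S) subset_union_right

theorem contraction_slope_eq (f : Finset V → ℝ) (w : V → ℝ) {S : Finset V}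
    (hwC : ∑ i ∈ univ \ S, w i ≠ 0) :
    (f univ - f S * ((∑ i ∈ univ \ S, w i) / (∑ i ∈ S, w i) + 1)) / ∑ i ∈ univ \ S, w i =
      (f univ - f S) / (∑ i ∈ univ \ S, w i) - f S / ∑ i ∈ S, w i := by
  field_simp
  ring

theorem contraction_objective_eq (f : Finset V → ℝ) (w : V → ℝ) {S Z : Finset V}
    (hZ : Z ⊆ univ \ S) (lam : ℝ) :
    f (Z ∪ S) - f S * ((∑ i ∈ Z, w i) / (∑ i ∈ S, w i) + 1)
        - (lam - f S / ∑ i ∈ S, w i) * ∑ i ∈ Z, w i =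
      f (Z ∪ S) - lam * ∑ i ∈ Z ∪ S, w i + (lam * ∑ i ∈ S, w i - f S) := by
  rw [sum_union (subset_sdiff.1 hZ).2]
  ring

end Contraction

theorem contraction_minimizer_correspondence_general
    {V : Type*} [Fintype V] [DecidableEq V]
    (f : Finset V → ℝ)
    (w : V → ℝ) (hw : ∀ i, 0 < w i)
    (S : Finset V) (hSne : S ≠ Finset.univ)
    (g : Finset V → ℝ)
    (hg : ∀ X : Finset V,
      g X = f (X ∪ S) - f S * ((∑ i ∈ X, w i) / (∑ i ∈ S, w i) + 1))
    (lam lam' : ℝ)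
    (hlam : lam = (f Finset.univ - f S) / ∑ i ∈ Finset.univ \ S, w i)
    (hlam' : lam' = g (Finset.univ \ S) / ∑ i ∈ Finset.univ \ S, w i)
    (X : Finset V) (hX : X ⊆ Finset.univ \ S) :
    (∀ Z : Finset V, Z ⊆ Finset.univ \ S →
        g X - lam' * ∑ i ∈ X, w i ≤ g Z - lam' * ∑ i ∈ Z, w i)
      ↔
    (∀ Y : Finset V, S ⊆ Y →
        f (X ∪ S) - lam * ∑ i ∈ X ∪ S, w i ≤ f Y - lam * ∑ i ∈ Y, w i) := by
  have hwC : ∑ i ∈ univ \ S, w i ≠ 0 :=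
    (sum_pos (fun i _ => hw i) (sdiff_nonempty.2 (mt univ_subset_iff.1 hSne))).ne'
  have hlam'_eq : lam' = lam - f S / ∑ i ∈ S, w i := by
    rw [hlam', hg, sdiff_union_of_subset (subset_univ S), contraction_slope_eq f w hwC, hlam]
  refine forall_le_contraction_iff (φ := fun Z => g Z - lam' * ∑ i ∈ Z, w i)
    (ψ := fun Y => f Y - lam * ∑ i ∈ Y, w i) (lam * ∑ i ∈ S, w i - f S) (fun Z hZ => ?_) hX
  rw [hg, hlam'_eq]
  exact contraction_objective_eq f w hZ lam

/-- `X ⊆ V ∖ S` minimizes `g(X) − λ' w(X)` over subsets of `V ∖ S` iff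
`X ∪ S` minimizes `f(Y) − λ w(Y)` over subsets `Y ⊆ V` containing `S`, where
`g(X) = f(X ∪ S) − f(S)(w(X)/w(S) + 1)`, `λ = (f(V) − f(S))/w(V ∖ S)` and
`λ' = g(V ∖ S)/w(V ∖ S)`. -/
theorem contraction_minimizer_correspondence
    {V : Type*} [Fintype V] [DecidableEq V]
    (f : Finset V → ℝ) (hf0 : f ∅ = 0)
    (hsub : ∀ X Y : Finset V, f (X ∪ Y) + f (X ∩ Y) ≤ f X + f Y)
    (w : V → ℝ) (hw : ∀ i, 0 < w i)
    (S : Finset V) (hS : S.Nonempty) (hSne : S ≠ Finset.univ)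
    (g : Finset V → ℝ)
    (hg : ∀ X : Finset V,
      g X = f (X ∪ S) - f S * ((∑ i ∈ X, w i) / (∑ i ∈ S, w i) + 1))
    (lam lam' : ℝ)
    (hlam : lam = (f Finset.univ - f S) / ∑ i ∈ Finset.univ \ S, w i)
    (hlam' : lam' = g (Finset.univ \ S) / ∑ i ∈ Finset.univ \ S, w i)
    (X : Finset V) (hX : X ⊆ Finset.univ \ S) :
    (∀ Z : Finset V, Z ⊆ Finset.univ \ S →
        g X - lam' * ∑ i ∈ X, w i ≤ g Z - lam' * ∑ i ∈ Z, w i)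
      ↔
    (∀ Y : Finset V, S ⊆ Y →
        f (X ∪ S) - lam * ∑ i ∈ X ∪ S, w i ≤ f Y - lam * ∑ i ∈ Y, w i) :=
  contraction_minimizer_correspondence_general f w hw S hSne g hg lam lam' hlam hlam' X hX
end

section
/- Let f : 2^V → ℝ be submodular with f(∅)=0, w ∈ ℝ_{>0}^V, and let r* be the unique minimizer of Σ_{i∈V} r_i²/w_i over B(f). Then r* also maximizes min_{i∈V} r_i/w_i over B(f), and r* minimizes max_{i∈V} r_i/w_i over B(f). -/
open Finset

section AuxTight

variable {V : Type*} [Fintype V] [DecidableEq V]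

/-- A set is tight for `r` w.r.t. `f` if the corresponding constraint holds with equality. -/
def MyTight (f : Finset V → ℝ) (r : V → ℝ) (X : Finset V) : Prop := ∑ i ∈ X, r i = f X

lemma myTight_union_inter {f : Finset V → ℝ} {r : V → ℝ}
    (hB : ∀ X : Finset V, ∑ i ∈ X, r i ≤ f X)
    (hsub : ∀ X Y : Finset V, f (X ∪ Y) + f (X ∩ Y) ≤ f X + f Y)
    {X Y : Finset V} (hX : MyTight f r X) (hY : MyTight f r Y) :
    MyTight f r (X ∪ Y) ∧ MyTight f r (X ∩ Y) := by
  have hsum : ∑ i ∈ X ∪ Y, r i + ∑ i ∈ X ∩ Y, r i = ∑ i ∈ X, r i + ∑ i ∈ Y, r i :=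
    Finset.sum_union_inter
  have h1 := hB (X ∪ Y); have h2 := hB (X ∩ Y); have h3 := hsub X Y
  unfold MyTight at *
  constructor <;> linarith

lemma myTight_sup {f : Finset V → ℝ} {r : V → ℝ} {ι : Type*}
    (hB : ∀ X : Finset V, ∑ i ∈ X, r i ≤ f X)
    (hsub : ∀ X Y : Finset V, f (X ∪ Y) + f (X ∩ Y) ≤ f X + f Y)
    (hf0 : f ∅ = 0) (s : Finset ι) (X : ι → Finset V)
    (h : ∀ j ∈ s, MyTight f r (X j)) : MyTight f r (s.sup X) := by
  induction s using Finset.cons_induction with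
  | empty => simp [MyTight, hf0]
  | cons a s ha ih =>
    rw [Finset.sup_cons]
    have h1 := h a (Finset.mem_cons_self a s)
    have h2 := ih fun j hj => h j (Finset.mem_cons.2 (Or.inr hj))
    have := (myTight_union_inter hB hsub h1 h2).1
    simpa [Finset.sup_eq_union] using this

lemma myTight_inf {f : Finset V → ℝ} {r : V → ℝ} {ι : Type*}
    (hB : ∀ X : Finset V, ∑ i ∈ X, r i ≤ f X)
    (hsub : ∀ X Y : Finset V, f (X ∪ Y) + f (X ∩ Y) ≤ f X + f Y)
    (hV : ∑ i, r i = f Finset.univ) (s : Finset ι) (X : ι → Finset V)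
    (h : ∀ j ∈ s, MyTight f r (X j)) : MyTight f r (s.inf X) := by
  induction s using Finset.cons_induction with
  | empty => simpa [MyTight, Finset.top_eq_univ] using hV
  | cons a s ha ih =>
    rw [Finset.inf_cons]
    have h1 := h a (Finset.mem_cons_self a s)
    have h2 := ih fun j hj => h j (Finset.mem_cons.2 (Or.inr hj))
    have := (myTight_union_inter hB hsub h1 h2).2
    simpa [Finset.inf_eq_inter] using this

/-- Exchange argument: if the quadratic minimizer satisfies `r i / w i < r j / w j`,
then some tight set contains `i` but not `j`. -/
lemma exists_tight_sep
    (f : Finset V → ℝ) (w : V → ℝ) (hw : ∀ i, 0 < w i) (r : V → ℝ)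
    (hrB : (∀ X : Finset V, ∑ i ∈ X, r i ≤ f X) ∧ ∑ i, r i = f Finset.univ)
    (hrmin : ∀ s : V → ℝ,
      ((∀ X : Finset V, ∑ i ∈ X, s i ≤ f X) ∧ ∑ i, s i = f Finset.univ) →
      ∑ i, (r i) ^ 2 / w i ≤ ∑ i, (s i) ^ 2 / w i)
    {i j : V} (hij : r i / w i < r j / w j) :
    ∃ X : Finset V, i ∈ X ∧ j ∉ X ∧ MyTight f r X := by
  have hne : i ≠ j := by rintro rfl; exact lt_irrefl _ hij
  by_contra hcon
  push_neg at hcon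
  set S : Finset (Finset V) :=
    Finset.univ.filter (fun X => i ∈ X ∧ j ∉ X) with hS
  have hSne : S.Nonempty := ⟨{i}, by simp [hS, hne.symm]⟩
  have hslack : ∀ X ∈ S, 0 < f X - ∑ k ∈ X, r k := by
    intro X hX
    simp only [hS, Finset.mem_filter] at hX
    have h1 := hrB.1 X
    have h2 := hcon X hX.2.1 hX.2.2
    unfold MyTight at h2
    cases lt_or_eq_of_le h1 with
    | inl h => linarith
    | inr h => exact absurd h h2
  set ε0 : ℝ := S.inf' hSne (fun X => f X - ∑ k ∈ X, r k) with hε0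
  have hε0pos : 0 < ε0 := by
    rw [hε0, Finset.lt_inf'_iff]
    exact hslack
  set Δ : ℝ := r j / w j - r i / w i with hΔ
  have hΔpos : 0 < Δ := by simp [hΔ]; linarith
  set C : ℝ := 1 / w i + 1 / w j with hC
  have hCpos : 0 < C := by have h1 := hw i; have h2 := hw j; positivity
  set ε : ℝ := min ε0 (Δ / C) with hε
  have hεpos : 0 < ε := lt_min hε0pos (div_pos hΔpos hCpos)
  set s : V → ℝ := fun k => r k + (if k = i then ε else 0) - (if k = j then ε else 0)
    with hs
  have hsum : ∀ X : Finset V, ∑ k ∈ X, s k =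
      ∑ k ∈ X, r k + (if i ∈ X then ε else 0) - (if j ∈ X then ε else 0) := by
    intro X
    simp [hs, Finset.sum_add_distrib, Finset.sum_sub_distrib, Finset.sum_ite_eq']
  have hsB : (∀ X : Finset V, ∑ k ∈ X, s k ≤ f X) ∧ ∑ k, s k = f Finset.univ := by
    constructor
    · intro X
      rw [hsum X]
      by_cases hiX : i ∈ X
      · by_cases hjX : j ∈ X
        · simpa [hiX, hjX] using hrB.1 X
        · have hXS : X ∈ S := by simp [hS, hiX, hjX]
          have : ε0 ≤ f X - ∑ k ∈ X, r k := Finset.inf'_le _ hXS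
          have hεle : ε ≤ ε0 := min_le_left _ _
          simp only [hiX, hjX, if_true, if_false]
          linarith
      · have h1 := hrB.1 X
        by_cases hjX : j ∈ X <;> simp [hiX, hjX] <;> linarith
    · rw [hsum Finset.univ]
      simpa using hrB.2
  have hmin := hrmin s hsB
  have hdiff : ∑ k, (s k) ^ 2 / w k - ∑ k, (r k) ^ 2 / w k =
      ((r i + ε) ^ 2 - (r i) ^ 2) / w i + ((r j - ε) ^ 2 - (r j) ^ 2) / w j := by
    rw [← Finset.sum_sub_distrib]
    have : ∀ k, (s k) ^ 2 / w k - (r k) ^ 2 / w k =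
        (if k = i then ((r i + ε) ^ 2 - (r i) ^ 2) / w i else 0) +
        (if k = j then ((r j - ε) ^ 2 - (r j) ^ 2) / w j else 0) := by
      intro k
      by_cases hki : k = i
      · subst hki; simp only [hs, hne, if_true, if_false, if_neg hne]; ring
      · by_cases hkj : k = j
        · subst hkj; simp only [hs, if_neg hki, if_true]; ring
        · simp [hs, hki, hkj]
    rw [Finset.sum_congr rfl (fun k _ => this k), Finset.sum_add_distrib]
    simp [Finset.sum_ite_eq']
  have hkey : 0 ≤ ((r i + ε) ^ 2 - (r i) ^ 2) / w i + ((r j - ε) ^ 2 - (r j) ^ 2) / w j := by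
    linarith [hdiff, hmin]
  have hwi := hw i
  have hwj := hw j
  have hexp : ((r i + ε) ^ 2 - (r i) ^ 2) / w i + ((r j - ε) ^ 2 - (r j) ^ 2) / w j =
      2 * ε * (r i / w i - r j / w j) + ε ^ 2 * C := by
    rw [hC]; field_simp; ring
  have h2 : 2 * ε * Δ ≤ ε ^ 2 * C := by
    rw [hexp] at hkey
    have : r i / w i - r j / w j = -Δ := by rw [hΔ]; ring
    rw [this] at hkey
    nlinarith
  have h3 : 2 * Δ ≤ ε * C := by
    have := mul_le_mul_of_nonneg_left h2 (le_of_lt (inv_pos.2 hεpos))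
    calc 2 * Δ = ε⁻¹ * (2 * ε * Δ) := by field_simp
    _ ≤ ε⁻¹ * (ε ^ 2 * C) := this
    _ = ε * C := by field_simp
  have h4 : ε * C ≤ Δ := by
    have hεle : ε ≤ Δ / C := min_le_right _ _
    calc ε * C ≤ (Δ / C) * C := mul_le_mul_of_nonneg_right hεle hCpos.le
    _ = Δ := by field_simp
  linarith

/-- Any "level set" of the ratios `r i / w i` of the quadratic minimizer is tight. -/
lemma levelSet_tight
    (f : Finset V → ℝ) (hf0 : f ∅ = 0)
    (hsub : ∀ X Y : Finset V, f (X ∪ Y) + f (X ∩ Y) ≤ f X + f Y)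
    (w : V → ℝ) (hw : ∀ i, 0 < w i) (r : V → ℝ)
    (hrB : (∀ X : Finset V, ∑ i ∈ X, r i ≤ f X) ∧ ∑ i, r i = f Finset.univ)
    (hrmin : ∀ s : V → ℝ,
      ((∀ X : Finset V, ∑ i ∈ X, s i ≤ f X) ∧ ∑ i, s i = f Finset.univ) →
      ∑ i, (r i) ^ 2 / w i ≤ ∑ i, (s i) ^ 2 / w i)
    (A : Finset V)
    (hA : ∀ i ∈ A, ∀ j ∉ A, r i / w i < r j / w j) : MyTight f r A := by
  have tight_univ : MyTight f r Finset.univ := hrB.2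
  have hch : ∀ i j : V, ∃ X : Finset V, MyTight f r X ∧
      (i ∈ A → j ∉ A → i ∈ X ∧ j ∉ X) := by
    intro i j
    by_cases h : i ∈ A ∧ j ∉ A
    · obtain ⟨X, hX1, hX2, hX3⟩ := exists_tight_sep f w hw r hrB hrmin (hA i h.1 j h.2)
      exact ⟨X, hX3, fun _ _ => ⟨hX1, hX2⟩⟩
    · exact ⟨Finset.univ, tight_univ, fun h1 h2 => absurd ⟨h1, h2⟩ h⟩
  choose g hg1 hg2 using hch
  set T : V → Finset V := fun i => (Finset.univ \ A).inf (g i) with hT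
  have hTt : ∀ i, MyTight f r (T i) := fun i =>
    myTight_inf hrB.1 hsub hrB.2 _ (g i) (fun j _ => hg1 i j)
  have hTmem : ∀ i ∈ A, i ∈ T i := by
    intro i hi
    rw [hT, Finset.mem_inf]
    intro j hj
    exact (hg2 i j hi (Finset.mem_sdiff.1 hj).2).1
  have hTsub : ∀ i ∈ A, T i ⊆ A := by
    intro i hi x hx
    by_contra hxA
    have hx2 : x ∈ Finset.univ \ A := Finset.mem_sdiff.2 ⟨Finset.mem_univ x, hxA⟩
    exact (hg2 i x hi hxA).2 (Finset.mem_inf.1 hx x hx2)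
  have hAeq : A = A.sup T := by
    apply Finset.Subset.antisymm
    · intro x hx
      exact Finset.mem_sup.2 ⟨x, hx, hTmem x hx⟩
    · intro x hx
      obtain ⟨i, hi, hxi⟩ := Finset.mem_sup.1 hx
      exact hTsub i hi hxi
  rw [hAeq]
  exact myTight_sup hrB.1 hsub hf0 A T (fun i _ => hTt i)

end AuxTight

/-- The minimizer `r*` of `∑ i, r i ^ 2 / w i` over the base polyhedron
`B(f)` also maximizes `min_{i} r i / w i` and minimizes `max_{i} r i / w i` over `B(f)`. -/
theorem quadratic_minimizer_is_minmax_and_maxmin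
    {V : Type*} [Fintype V] [DecidableEq V] [Nonempty V]
    (f : Finset V → ℝ) (hf0 : f ∅ = 0)
    (hsub : ∀ X Y : Finset V, f (X ∪ Y) + f (X ∩ Y) ≤ f X + f Y)
    (w : V → ℝ) (hw : ∀ i, 0 < w i)
    (rstar : V → ℝ)
    (hrB : (∀ X : Finset V, ∑ i ∈ X, rstar i ≤ f X) ∧ ∑ i, rstar i = f Finset.univ)
    (hrmin : ∀ s : V → ℝ,
      ((∀ X : Finset V, ∑ i ∈ X, s i ≤ f X) ∧ ∑ i, s i = f Finset.univ) →
      ∑ i, (rstar i) ^ 2 / w i ≤ ∑ i, (s i) ^ 2 / w i) :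
    ∀ s : V → ℝ,
      ((∀ X : Finset V, ∑ i ∈ X, s i ≤ f X) ∧ ∑ i, s i = f Finset.univ) →
      (Finset.univ.inf' Finset.univ_nonempty (fun i => s i / w i) ≤
        Finset.univ.inf' Finset.univ_nonempty (fun i => rstar i / w i)) ∧
      (Finset.univ.sup' Finset.univ_nonempty (fun i => rstar i / w i) ≤
        Finset.univ.sup' Finset.univ_nonempty (fun i => s i / w i)) := by
  intro s hsB
  classical
  constructor
  · -- max-min part
    set α : ℝ := Finset.univ.inf' Finset.univ_nonempty (fun i => rstar i / w i) with hα
    set A : Finset V := Finset.univ.filter (fun i => rstar i / w i ≤ α) with hA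
    have hAne : A.Nonempty := by
      obtain ⟨i, _, hi⟩ := Finset.exists_mem_eq_inf' Finset.univ_nonempty
        (fun i => rstar i / w i)
      refine ⟨i, ?_⟩
      rw [hA, Finset.mem_filter]
      exact ⟨Finset.mem_univ i, le_of_eq (by rw [hα, hi])⟩
    have hAtight : MyTight f rstar A :=
      levelSet_tight f hf0 hsub w hw rstar hrB hrmin A (by
        intro i hi j hj
        simp only [hA, Finset.mem_filter, Finset.mem_univ, true_and] at hi hj
        push_neg at hj
        exact lt_of_le_of_lt hi hj)
    have hreq : ∀ i ∈ A, rstar i = α * w i := by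
      intro i hi
      simp only [hA, Finset.mem_filter, Finset.mem_univ, true_and] at hi
      have h2 : α ≤ rstar i / w i := Finset.inf'_le _ (Finset.mem_univ i)
      have h3 : rstar i / w i = α := le_antisymm hi h2
      have hwi := hw i
      rw [div_eq_iff hwi.ne'] at h3
      linarith [h3]
    have hsumA : ∑ i ∈ A, rstar i = α * ∑ i ∈ A, w i := by
      rw [Finset.mul_sum]
      exact Finset.sum_congr rfl hreq
    have hsA : ∑ i ∈ A, s i ≤ α * ∑ i ∈ A, w i := by
      calc ∑ i ∈ A, s i ≤ f A := hsB.1 A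
      _ = ∑ i ∈ A, rstar i := hAtight.symm
      _ = α * ∑ i ∈ A, w i := hsumA
    have hex : ∃ i ∈ A, s i / w i ≤ α := by
      by_contra hcon
      push_neg at hcon
      have : α * ∑ i ∈ A, w i < ∑ i ∈ A, s i := by
        rw [Finset.mul_sum]
        apply Finset.sum_lt_sum_of_nonempty hAne
        intro i hi
        have := hcon i hi
        have hwi := hw i
        rw [lt_div_iff₀ hwi] at this
        linarith
      linarith
    obtain ⟨i, _, hi⟩ := hex
    calc Finset.univ.inf' Finset.univ_nonempty (fun i => s i / w i) ≤ s i / w i :=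
      Finset.inf'_le _ (Finset.mem_univ i)
    _ ≤ α := hi
  · -- min-max part
    set β : ℝ := Finset.univ.sup' Finset.univ_nonempty (fun i => rstar i / w i) with hβ
    set B : Finset V := Finset.univ.filter (fun i => rstar i / w i < β) with hB
    set Bc : Finset V := Finset.univ \ B with hBc
    have hBcne : Bc.Nonempty := by
      obtain ⟨i, _, hi⟩ := Finset.exists_mem_eq_sup' Finset.univ_nonempty
        (fun i => rstar i / w i)
      refine ⟨i, ?_⟩
      rw [hBc, Finset.mem_sdiff]
      refine ⟨Finset.mem_univ i, ?_⟩
      rw [hB, Finset.mem_filter]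
      rintro ⟨-, hlt⟩
      rw [hβ, hi] at hlt
      exact lt_irrefl _ hlt
    have hBtight : MyTight f rstar B :=
      levelSet_tight f hf0 hsub w hw rstar hrB hrmin B (by
        intro i hi j hj
        simp only [hB, Finset.mem_filter, Finset.mem_univ, true_and] at hi hj
        push_neg at hj
        exact lt_of_lt_of_le hi hj)
    have hreq : ∀ i ∈ Bc, rstar i = β * w i := by
      intro i hi
      simp only [hBc, hB, Finset.mem_sdiff, Finset.mem_filter, Finset.mem_univ,
        true_and] at hi
      push_neg at hi
      have h2 : rstar i / w i ≤ β := by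
        rw [hβ]; exact Finset.le_sup' (fun j => rstar j / w j) (Finset.mem_univ i)
      have h3 : rstar i / w i = β := le_antisymm h2 hi
      have hwi := hw i
      rw [div_eq_iff hwi.ne'] at h3
      linarith [h3]
    have hsumBc : ∑ i ∈ Bc, rstar i = β * ∑ i ∈ Bc, w i := by
      rw [Finset.mul_sum]
      exact Finset.sum_congr rfl hreq
    have hsplit : ∑ i ∈ Bc, s i = f Finset.univ - ∑ i ∈ B, s i := by
      rw [hBc, Finset.sum_sdiff_eq_sub (Finset.subset_univ B), hsB.2]
    have hsplitr : ∑ i ∈ Bc, rstar i = f Finset.univ - ∑ i ∈ B, rstar i := by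
      rw [hBc, Finset.sum_sdiff_eq_sub (Finset.subset_univ B), hrB.2]
    have hsBc : β * ∑ i ∈ Bc, w i ≤ ∑ i ∈ Bc, s i := by
      have h1 : ∑ i ∈ B, s i ≤ f B := hsB.1 B
      have h2 : f B = ∑ i ∈ B, rstar i := hBtight.symm
      rw [hsplit, ← hsumBc, hsplitr]
      linarith
    have hex : ∃ i ∈ Bc, β ≤ s i / w i := by
      by_contra hcon
      push_neg at hcon
      have : ∑ i ∈ Bc, s i < β * ∑ i ∈ Bc, w i := by
        rw [Finset.mul_sum]
        apply Finset.sum_lt_sum_of_nonempty hBcne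
        intro i hi
        have := hcon i hi
        have hwi := hw i
        rw [div_lt_iff₀ hwi] at this
        linarith
      linarith
    obtain ⟨i, _, hi⟩ := hex
    calc β ≤ s i / w i := hi
    _ ≤ Finset.univ.sup' Finset.univ_nonempty (fun i => s i / w i) :=
      Finset.le_sup' (fun j => s j / w j) (Finset.mem_univ i)
end

section
/- For any submodular function f on a finite set V with f(∅) = 0, the Shapley value φ, defined by φ_i = Σ_{C ⊆ V∖{i}} |C|!(|V|−|C|−1)!/|V|! · (f(C ∪ {i}) − f(C)), lies in the base polyhedron B(f) = { r : r(X) ≤ f(X) ∀X ⊆ V, r(V) = f(V) }. -/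
open Finset

namespace ShapleyAux

variable {V : Type*} [Fintype V] [DecidableEq V]




/-- The set of the first `k` elements in the order `π`. -/
def pref (π : Fin (Fintype.card V) ≃ V) (k : ℕ) : Finset V :=
  (Finset.univ.filter (fun j : Fin (Fintype.card V) => (j : ℕ) < k)).image π

/-- Marginal contribution of `i` in the order `π`. -/
def marg (f : Finset V → ℝ) (π : Fin (Fintype.card V) ≃ V) (i : V) : ℝ :=
  f (pref π ((π.symm i : ℕ) + 1)) - f (pref π (π.symm i))

lemma mem_pref {π : Fin (Fintype.card V) ≃ V} {k : ℕ} {x : V} :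
    x ∈ pref π k ↔ (π.symm x : ℕ) < k := by
  simp only [pref, mem_image, mem_filter, mem_univ, true_and]
  constructor
  · rintro ⟨j, hj, rfl⟩; simpa using hj
  · intro h; exact ⟨π.symm x, h, by simp⟩

lemma pref_zero (π : Fin (Fintype.card V) ≃ V) : pref π 0 = ∅ := by
  ext x; simp [mem_pref]

lemma pref_all (π : Fin (Fintype.card V) ≃ V) {k : ℕ} (hk : Fintype.card V ≤ k) :
    pref π k = univ := by
  ext x; simp only [mem_pref, mem_univ, iff_true]
  exact lt_of_lt_of_le (π.symm x).isLt hk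

lemma card_filter_lt {n k : ℕ} (h : k ≤ n) :
    (((univ : Finset (Fin n))).filter (fun j : Fin n => (j:ℕ) < k)).card = k := by
  have : (Finset.univ.filter (fun j : Fin n => (j:ℕ) < k)) =
      (Finset.range k).attachFin (fun m hm => lt_of_lt_of_le (mem_range.mp hm) h) := by
    ext j; simp [Finset.mem_attachFin]
  rw [this, Finset.card_attachFin, Finset.card_range]

lemma card_pref (π : Fin (Fintype.card V) ≃ V) {k : ℕ} (hk : k ≤ Fintype.card V) :
    (pref π k).card = k := by
  rw [pref, Finset.card_image_of_injective _ π.injective, card_filter_lt hk]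

lemma pref_succ (π : Fin (Fintype.card V) ≃ V) {k : ℕ} (hk : k < Fintype.card V) :
    pref π (k + 1) = insert (π ⟨k, hk⟩) (pref π k) := by
  ext x
  simp only [mem_pref, mem_insert]
  constructor
  · intro h
    rcases Nat.lt_succ_iff_lt_or_eq.mp h with h' | h'
    · exact Or.inr h'
    · left
      have : π.symm x = ⟨k, hk⟩ := Fin.ext h'
      rw [← this]; simp
  · rintro (rfl | h)
    · simp [Nat.lt_succ_iff]
    · exact Nat.lt_succ_of_lt h

lemma notMem_pref_self (π : Fin (Fintype.card V) ≃ V) {k : ℕ} (hk : k < Fintype.card V) :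
    π ⟨k, hk⟩ ∉ pref π k := by
  simp [mem_pref]

/-- Telescoping: total marginal contributions equal `f univ - f ∅`. -/
lemma sum_marg (f : Finset V → ℝ) (π : Fin (Fintype.card V) ≃ V) :
    ∑ i, marg f π i = f univ - f ∅ := by
  have h1 : ∑ i, marg f π i = ∑ k : Fin (Fintype.card V), marg f π (π k) :=
    (Equiv.sum_comp π (marg f π)).symm
  have h2 : ∀ k : Fin (Fintype.card V),
      marg f π (π k) = f (pref π ((k:ℕ) + 1)) - f (pref π (k:ℕ)) := by
    intro k; simp [marg]
  rw [h1]
  simp only [h2]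
  rw [Fin.sum_univ_eq_sum_range (fun k => f (pref π (k+1)) - f (pref π k)),
    Finset.sum_range_sub (fun k => f (pref π k))]
  rw [pref_all π le_rfl, pref_zero]


lemma greedy (f : Finset V → ℝ) (hf0 : f ∅ = 0)
    (hsub : ∀ X Y : Finset V, f (X ∪ Y) + f (X ∩ Y) ≤ f X + f Y)
    (π : Fin (Fintype.card V) ≃ V) (X : Finset V) :
    ∀ k : ℕ, ∑ i ∈ X.filter (fun i => ((π.symm i : ℕ) < k)), marg f π i ≤ f (X ∩ pref π k) := by
  intro k
  induction k with
  | zero => simp [pref_zero, hf0]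
  | succ k ih =>
    by_cases hk : k < Fintype.card V
    · set a := π ⟨k, hk⟩ with ha
      have hsymm : (π.symm a : ℕ) = k := by simp [ha]
      have hanp : a ∉ pref π k := by simp [mem_pref, hsymm]
      by_cases haX : a ∈ X
      · have hfilter : X.filter (fun i => (π.symm i : ℕ) < k+1)
            = insert a (X.filter (fun i => (π.symm i : ℕ) < k)) := by
          ext x
          simp only [mem_filter, mem_insert]
          constructor
          · rintro ⟨hx, hlt⟩
            rcases Nat.lt_succ_iff_lt_or_eq.mp hlt with h | h
            · exact Or.inr ⟨hx, h⟩
            · left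
              have hx2 : π.symm x = ⟨k, hk⟩ := Fin.ext h
              rw [ha, ← hx2]; simp
          · rintro (rfl | ⟨hx, h⟩)
            · exact ⟨haX, by rw [hsymm]; omega⟩
            · exact ⟨hx, Nat.lt_succ_of_lt h⟩
        have hanotin : a ∉ X.filter (fun i => (π.symm i : ℕ) < k) := by
          simp [mem_filter, hsymm]
        have hmarg : marg f π a = f (pref π (k+1)) - f (pref π k) := by
          simp [marg, hsymm]
        have hXcap : X ∩ pref π (k+1) = insert a (X ∩ pref π k) := by
          rw [pref_succ π hk, ← ha]
          ext x
          simp only [mem_inter, mem_insert]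
          constructor
          · rintro ⟨hx, (rfl | hp)⟩
            · exact Or.inl rfl
            · exact Or.inr ⟨hx, hp⟩
          · rintro (rfl | ⟨hx, hp⟩)
            · exact ⟨haX, Or.inl rfl⟩
            · exact ⟨hx, Or.inr hp⟩
        have hkey := hsub (insert a (X ∩ pref π k)) (pref π k)
        have hu : insert a (X ∩ pref π k) ∪ pref π k = pref π (k+1) := by
          rw [pref_succ π hk, ← ha, Finset.insert_union]
          congr 1
          exact Finset.union_eq_right.mpr inter_subset_right
        have hi : insert a (X ∩ pref π k) ∩ pref π k = X ∩ pref π k := by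
          ext x
          simp only [mem_inter, mem_insert]
          constructor
          · rintro ⟨(rfl | ⟨hx, hp⟩), hp2⟩
            · exact absurd hp2 hanp
            · exact ⟨hx, hp⟩
          · rintro ⟨hx, hp⟩; exact ⟨Or.inr ⟨hx, hp⟩, hp⟩
        rw [hu, hi] at hkey
        rw [hfilter, Finset.sum_insert hanotin, hXcap, hmarg]
        linarith
      · have hfilter : X.filter (fun i => (π.symm i : ℕ) < k+1)
            = X.filter (fun i => (π.symm i : ℕ) < k) := by
          ext x
          simp only [mem_filter, and_congr_right_iff]
          intro hx
          constructor
          · intro hlt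
            rcases Nat.lt_succ_iff_lt_or_eq.mp hlt with h | h
            · exact h
            · exfalso
              have hx2 : π.symm x = ⟨k, hk⟩ := Fin.ext h
              apply haX
              have : x = a := by rw [ha, ← hx2]; simp
              rwa [this] at hx
          · exact Nat.lt_succ_of_lt
        have hXcap : X ∩ pref π (k+1) = X ∩ pref π k := by
          rw [pref_succ π hk, ← ha]
          ext x
          simp only [mem_inter, mem_insert]
          constructor
          · rintro ⟨hx, (rfl | hp)⟩
            · exact absurd hx haX
            · exact ⟨hx, hp⟩
          · rintro ⟨hx, hp⟩; exact ⟨hx, Or.inr hp⟩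
        rw [hfilter, hXcap]; exact ih
    · push_neg at hk
      have hfilter : X.filter (fun i => (π.symm i : ℕ) < k+1)
          = X.filter (fun i => (π.symm i : ℕ) < k) := by
        apply Finset.filter_congr
        intro x _
        have := (π.symm x).isLt
        omega
      rw [pref_all π hk] at ih
      rw [hfilter, pref_all π (by omega)]
      exact ih

lemma sum_marg_le (f : Finset V → ℝ) (hf0 : f ∅ = 0)
    (hsub : ∀ X Y : Finset V, f (X ∪ Y) + f (X ∩ Y) ≤ f X + f Y)
    (π : Fin (Fintype.card V) ≃ V) (X : Finset V) :
    ∑ i ∈ X, marg f π i ≤ f X := by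
  have h := greedy f hf0 hsub π X (Fintype.card V)
  have h1 : X.filter (fun i => ((π.symm i : ℕ) < Fintype.card V)) = X :=
    Finset.filter_true_of_mem (fun i _ => (π.symm i).isLt)
  rwa [h1, pref_all π le_rfl, Finset.inter_univ] at h


lemma cardD (i : V) {C : Finset V} (hC : C ⊆ univ.erase i) :
    ((univ.erase i) \ C).card = Fintype.card V - 1 - C.card := by
  rw [Finset.card_sdiff_of_subset hC, Finset.card_erase_of_mem (mem_univ i), Finset.card_univ]

lemma cardC_lt (i : V) {C : Finset V} (hC : C ⊆ univ.erase i) :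
    C.card < Fintype.card V := by
  have h1 : C.card ≤ (univ.erase i).card := Finset.card_le_card hC
  have h2 : (univ.erase i).card = Fintype.card V - 1 := by
    rw [Finset.card_erase_of_mem (mem_univ i), Finset.card_univ]
  have h3 : 0 < Fintype.card V := Fintype.card_pos_iff.mpr ⟨i⟩
  omega

def u (i : V) (C : Finset V) (hC : C ⊆ univ.erase i)
    (a : Fin C.card ≃ {x // x ∈ C})
    (b : Fin (((univ.erase i) \ C).card) ≃ {x // x ∈ (univ.erase i) \ C}) :
    Fin (Fintype.card V) → V := fun j =>
  if h : (j : ℕ) < C.card then (a ⟨j, h⟩ : V)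
  else if h2 : (j : ℕ) = C.card then i
  else (b ⟨(j : ℕ) - (C.card + 1), by
    have hcard := cardD i hC
    have := j.isLt
    omega⟩ : V)

variable {i : V} {C : Finset V} {hC : C ⊆ univ.erase i}
  {a : Fin C.card ≃ {x // x ∈ C}}
  {b : Fin (((univ.erase i) \ C).card) ≃ {x // x ∈ (univ.erase i) \ C}}

lemma u_val_lt {j : Fin (Fintype.card V)} (h : (j : ℕ) < C.card) :
    u i C hC a b j = (a ⟨j, h⟩ : V) := dif_pos h

lemma u_val_eq {j : Fin (Fintype.card V)} (h : (j : ℕ) = C.card) :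
    u i C hC a b j = i := by
  unfold u; rw [dif_neg (by omega), dif_pos h]

lemma u_val_gt {j : Fin (Fintype.card V)} (h : C.card < (j : ℕ))
    (hpf : (j : ℕ) - (C.card + 1) < ((univ.erase i) \ C).card) :
    u i C hC a b j = (b ⟨(j : ℕ) - (C.card + 1), hpf⟩ : V) := by
  unfold u; rw [dif_neg (by omega), dif_neg (by omega)]

lemma u_mem_C {j : Fin (Fintype.card V)} (h : (j : ℕ) < C.card) :
    u i C hC a b j ∈ C := by rw [u_val_lt h]; exact (a ⟨j, h⟩).2

lemma u_mem_D {j : Fin (Fintype.card V)} (h : C.card < (j : ℕ)) :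
    u i C hC a b j ∈ (univ.erase i) \ C := by
  have hpf : (j : ℕ) - (C.card + 1) < ((univ.erase i) \ C).card := by
    have := cardD i hC; have := j.isLt; omega
  rw [u_val_gt h hpf]; exact (b _).2

lemma u_bijective (i : V) (C : Finset V) (hC : C ⊆ univ.erase i)
    (a : Fin C.card ≃ {x // x ∈ C})
    (b : Fin (((univ.erase i) \ C).card) ≃ {x // x ∈ (univ.erase i) \ C}) :
    Function.Bijective (u i C hC a b) := by
  rw [Fintype.bijective_iff_injective_and_card]
  refine ⟨?_, by simp⟩
  have hiC : i ∉ C := fun h => (Finset.mem_erase.mp (hC h)).1 rfl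
  intro j1 j2 h
  rcases lt_trichotomy (j1 : ℕ) C.card with h1 | h1 | h1 <;>
    rcases lt_trichotomy (j2 : ℕ) C.card with h2 | h2 | h2
  · rw [u_val_lt h1, u_val_lt h2] at h
    exact Fin.ext (Fin.mk.inj_iff.mp (a.injective (Subtype.coe_injective h)))
  · rw [u_val_lt h1, u_val_eq h2] at h
    exact absurd (h ▸ (a ⟨j1, h1⟩).2) hiC
  · exfalso
    have hm := u_mem_D (i := i) (hC := hC) (a := a) (b := b) h2
    rw [← h, u_val_lt h1] at hm
    exact (Finset.mem_sdiff.mp hm).2 (a ⟨j1, h1⟩).2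
  · rw [u_val_eq h1, u_val_lt h2] at h
    have hm := (a ⟨j2, h2⟩).2
    rw [← h] at hm
    exact absurd hm hiC
  · exact Fin.ext (by omega)
  · exfalso
    have hm := u_mem_D (i := i) (hC := hC) (a := a) (b := b) h2
    rw [← h, u_val_eq h1] at hm
    exact (Finset.mem_erase.mp (Finset.mem_sdiff.mp hm).1).1 rfl
  · exfalso
    have hm := u_mem_D (i := i) (hC := hC) (a := a) (b := b) h1
    rw [h, u_val_lt h2] at hm
    exact (Finset.mem_sdiff.mp hm).2 (a ⟨j2, h2⟩).2
  · exfalso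
    have hm := u_mem_D (i := i) (hC := hC) (a := a) (b := b) h1
    rw [h, u_val_eq h2] at hm
    exact (Finset.mem_erase.mp (Finset.mem_sdiff.mp hm).1).1 rfl
  · have hp1 : (j1 : ℕ) - (C.card + 1) < ((univ.erase i) \ C).card := by
      have := cardD i hC; have := j1.isLt; omega
    have hp2 : (j2 : ℕ) - (C.card + 1) < ((univ.erase i) \ C).card := by
      have := cardD i hC; have := j2.isLt; omega
    rw [u_val_gt h1 hp1, u_val_gt h2 hp2] at h
    have := Fin.mk.inj_iff.mp (b.injective (Subtype.coe_injective h))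
    exact Fin.ext (by omega)


noncomputable def mkPerm (i : V) (C : Finset V) (hC : C ⊆ univ.erase i)
    (a : Fin C.card ≃ {x // x ∈ C})
    (b : Fin (((univ.erase i) \ C).card) ≃ {x // x ∈ (univ.erase i) \ C}) :
    Fin (Fintype.card V) ≃ V :=
  Equiv.ofBijective (u i C hC a b) (u_bijective i C hC a b)

lemma mkPerm_apply (j : Fin (Fintype.card V)) :
    mkPerm i C hC a b j = u i C hC a b j := rfl

lemma mkPerm_symm_i : (((mkPerm i C hC a b).symm i : Fin (Fintype.card V)) : ℕ) = C.card := by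
  have h : mkPerm i C hC a b ⟨C.card, cardC_lt i hC⟩ = i :=
    u_val_eq (i := i) (C := C) (hC := hC) (a := a) (b := b) rfl
  have h2 : (mkPerm i C hC a b).symm i = ⟨C.card, cardC_lt i hC⟩ := by
    rw [Equiv.symm_apply_eq]; exact h.symm
  rw [h2]

lemma pref_mkPerm :
    pref (mkPerm i C hC a b) (((mkPerm i C hC a b).symm i : Fin (Fintype.card V)) : ℕ) = C := by
  rw [mkPerm_symm_i]
  set π := mkPerm i C hC a b with hπ
  apply Finset.eq_of_subset_of_card_le
  · intro x hx
    rw [mem_pref] at hx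
    have : x = π (π.symm x) := (Equiv.apply_symm_apply π x).symm
    rw [this, mkPerm_apply]
    exact u_mem_C hx
  · rw [card_pref π (le_of_lt (cardC_lt i hC))]

lemma card_fiber (i : V) (C : Finset V) (hC : C ⊆ univ.erase i) :
    (univ.filter (fun π : Fin (Fintype.card V) ≃ V =>
        pref π ((π.symm i : ℕ)) = C)).card
    = C.card.factorial * (Fintype.card V - C.card - 1).factorial := by
  classical
  set D := (univ.erase i) \ C with hD
  have hcd : D.card = Fintype.card V - 1 - C.card := by rw [hD]; exact cardD i hC
  have hclt := cardC_lt i hC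
  -- the bijection
  set F : (Fin C.card ≃ {x // x ∈ C}) × (Fin D.card ≃ {x // x ∈ D}) →
      {π : Fin (Fintype.card V) ≃ V // pref π ((π.symm i : ℕ)) = C} :=
    fun p => ⟨mkPerm i C hC p.1 p.2, pref_mkPerm⟩ with hF
  have hFbij : Function.Bijective F := by
    constructor
    · rintro ⟨a, b⟩ ⟨a', b'⟩ hpq
      have hperm : mkPerm i C hC a b = mkPerm i C hC a' b' := congrArg Subtype.val hpq
      have happ : ∀ j, u i C hC a b j = u i C hC a' b' j := by
        intro j
        rw [← mkPerm_apply, ← mkPerm_apply, hperm]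
      refine Prod.ext ?_ ?_
      · ext x
        have hx : ((⟨(x : ℕ), lt_trans x.isLt hclt⟩ : Fin (Fintype.card V)) : ℕ) < C.card :=
          x.isLt
        have := happ ⟨(x : ℕ), lt_trans x.isLt hclt⟩
        rw [u_val_lt hx, u_val_lt hx] at this
        have h2 := Subtype.coe_injective this
        simpa using congrArg Subtype.val h2
      · ext x
        have hxn : C.card + 1 + (x : ℕ) < Fintype.card V := by
          have := x.isLt; omega
        set j : Fin (Fintype.card V) := ⟨C.card + 1 + (x : ℕ), hxn⟩ with hj
        have hgt : C.card < (j : ℕ) := by simp only [hj, Fin.val_mk]; omega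
        have hpf : (j : ℕ) - (C.card + 1) < D.card := by
          have := x.isLt
          simp only [hj, Fin.val_mk]; omega
        have := happ j
        rw [u_val_gt hgt hpf, u_val_gt hgt hpf] at this
        have h2 := Subtype.coe_injective this
        have h3 : (⟨(j : ℕ) - (C.card + 1), hpf⟩ : Fin D.card) = x := by
          apply Fin.ext; simp only [hj, Fin.val_mk]; omega
        rw [h3] at h2
        simpa using congrArg Subtype.val h2
    · rintro ⟨π, hπ⟩
      have hsymm : ((π.symm i : Fin (Fintype.card V)) : ℕ) = C.card := by
        have := card_pref π (le_of_lt (π.symm i).isLt)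
        rw [hπ] at this
        omega
      have hmemC : ∀ j : Fin (Fintype.card V), (j : ℕ) < C.card → π j ∈ C := by
        intro j hj
        rw [← hπ, mem_pref]
        simpa [hsymm] using hj
      have hmemD : ∀ j : Fin (Fintype.card V), C.card < (j : ℕ) → π j ∈ D := by
        intro j hj
        rw [hD, Finset.mem_sdiff]
        constructor
        · rw [Finset.mem_erase]
          refine ⟨?_, mem_univ _⟩
          intro hji
          have : π.symm (π j) = π.symm i := by rw [hji]
          rw [Equiv.symm_apply_apply] at this
          have : (j : ℕ) = C.card := by rw [this, hsymm]
          omega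
        · intro hjC
          have : π j ∈ pref π ((π.symm i : ℕ)) := by rw [hπ]; exact hjC
          rw [mem_pref, Equiv.symm_apply_apply, hsymm] at this
          omega
      -- build a and b
      have ha0inj : Function.Injective (fun x : Fin C.card =>
          (⟨π ⟨(x : ℕ), lt_trans x.isLt hclt⟩, hmemC _ x.isLt⟩ : {x // x ∈ C})) := by
        intro x y hxy
        have h1 : π ⟨(x : ℕ), lt_trans x.isLt hclt⟩ = π ⟨(y : ℕ), lt_trans y.isLt hclt⟩ :=
          congrArg Subtype.val hxy
        exact Fin.ext (Fin.mk.inj_iff.mp (π.injective h1))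
      have ha0bij : Function.Bijective (fun x : Fin C.card =>
          (⟨π ⟨(x : ℕ), lt_trans x.isLt hclt⟩, hmemC _ x.isLt⟩ : {x // x ∈ C})) := by
        rw [Fintype.bijective_iff_injective_and_card]
        exact ⟨ha0inj, by simp⟩
      have hbn : ∀ x : Fin D.card, C.card + 1 + (x : ℕ) < Fintype.card V := by
        intro x; have := x.isLt; omega
      have hb0gt : ∀ x : Fin D.card,
          C.card < ((⟨C.card + 1 + (x : ℕ), hbn x⟩ : Fin (Fintype.card V)) : ℕ) := by
        intro x; simp; omega
      have hb0inj : Function.Injective (fun x : Fin D.card =>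
          (⟨π ⟨C.card + 1 + (x : ℕ), hbn x⟩, hmemD _ (hb0gt x)⟩ : {x // x ∈ D})) := by
        intro x y hxy
        have h1 : π ⟨C.card + 1 + (x : ℕ), hbn x⟩ = π ⟨C.card + 1 + (y : ℕ), hbn y⟩ :=
          congrArg Subtype.val hxy
        have h2 := Fin.mk.inj_iff.mp (π.injective h1)
        exact Fin.ext (by omega)
      have hb0bij : Function.Bijective (fun x : Fin D.card =>
          (⟨π ⟨C.card + 1 + (x : ℕ), hbn x⟩, hmemD _ (hb0gt x)⟩ : {x // x ∈ D})) := by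
        rw [Fintype.bijective_iff_injective_and_card]
        exact ⟨hb0inj, by simp⟩
      refine ⟨⟨Equiv.ofBijective _ ha0bij, Equiv.ofBijective _ hb0bij⟩, ?_⟩
      apply Subtype.ext
      show mkPerm i C hC _ _ = π
      apply Equiv.ext
      intro j
      rw [mkPerm_apply]
      rcases lt_trichotomy ((j : ℕ)) C.card with h1 | h1 | h1
      · rw [u_val_lt h1]
        show π ⟨((⟨(j : ℕ), h1⟩ : Fin C.card) : ℕ), _⟩ = π j
        congr 1
      · rw [u_val_eq h1]
        have : π.symm i = j := Fin.ext (by rw [hsymm, h1])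
        rw [← this, Equiv.apply_symm_apply]
      · have hpf : (j : ℕ) - (C.card + 1) < D.card := by
          have := j.isLt; omega
        rw [u_val_gt h1 hpf]
        show π ⟨C.card + 1 + ((⟨(j : ℕ) - (C.card + 1), hpf⟩ : Fin D.card) : ℕ), _⟩ = π j
        congr 1
        apply Fin.ext
        simp
        omega
  have hcard := Fintype.card_of_bijective hFbij
  rw [Fintype.card_prod] at hcard
  have hCeq : Fintype.card (Fin C.card ≃ {x // x ∈ C}) = C.card.factorial := by
    rw [Fintype.card_equiv (Fintype.equivOfCardEq (by simp))]
    simp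
  have hDeq : Fintype.card (Fin D.card ≃ {x // x ∈ D}) = (Fintype.card V - C.card - 1).factorial := by
    rw [Fintype.card_equiv (Fintype.equivOfCardEq (by simp))]
    simp only [Fintype.card_fin]
    congr 1
    omega
  rw [hCeq, hDeq] at hcard
  rw [← Fintype.card_subtype]
  exact hcard.symm



lemma sum_perm (f : Finset V → ℝ) (i : V) :
    ∑ π : Fin (Fintype.card V) ≃ V, marg f π i
    = ∑ C ∈ (univ.erase i).powerset,
        ((C.card.factorial * (Fintype.card V - C.card - 1).factorial : ℕ) : ℝ) *
          (f (insert i C) - f C) := by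
  have hmaps : ∀ π : Fin (Fintype.card V) ≃ V, π ∈ (univ : Finset _) →
      pref π ((π.symm i : ℕ)) ∈ (univ.erase i).powerset := by
    intro π _
    rw [mem_powerset]
    intro x hx
    rw [mem_pref] at hx
    rw [mem_erase]
    refine ⟨?_, mem_univ x⟩
    intro hxi
    rw [hxi] at hx
    omega
  rw [← Finset.sum_fiberwise_of_maps_to hmaps (fun π => marg f π i)]
  apply Finset.sum_congr rfl
  intro C hCp
  have hC : C ⊆ univ.erase i := mem_powerset.mp hCp
  have hmarg : ∀ π ∈ univ.filter
      (fun π : Fin (Fintype.card V) ≃ V => pref π ((π.symm i : ℕ)) = C),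
      marg f π i = f (insert i C) - f C := by
    intro π hπ
    rw [mem_filter] at hπ
    have hπC := hπ.2
    have hlt : ((π.symm i : Fin _) : ℕ) < Fintype.card V := (π.symm i).isLt
    have hins : pref π ((π.symm i : ℕ) + 1) = insert i (pref π ((π.symm i : ℕ))) := by
      rw [pref_succ π hlt]
      congr 1
      have h1 : (⟨((π.symm i : Fin _) : ℕ), hlt⟩ : Fin (Fintype.card V)) = π.symm i :=
        Fin.ext rfl
      rw [h1, Equiv.apply_symm_apply]
    rw [marg, hins, hπC]
  rw [Finset.sum_congr rfl hmarg, Finset.sum_const, card_fiber i C hC, nsmul_eq_mul]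

end ShapleyAux

/-- For any submodular `f` with `f ∅ = 0` on a nonempty finite set `V`,
the Shapley value `φ_i = ∑_{C ⊆ V∖{i}} |C|!(|V|−|C|−1)!/|V|! (f(C ∪ {i}) − f(C))`
lies in the base polyhedron `B(f)`. -/
theorem shapley_in_base
    {V : Type*} [Fintype V] [DecidableEq V] [Nonempty V]
    (f : Finset V → ℝ) (hf0 : f ∅ = 0)
    (hsub : ∀ X Y : Finset V, f (X ∪ Y) + f (X ∩ Y) ≤ f X + f Y)
    (phi : V → ℝ)
    (hphi : ∀ i, phi i =
      ∑ C ∈ (Finset.univ.erase i).powerset,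
        ((C.card.factorial * (Fintype.card V - C.card - 1).factorial : ℕ) : ℝ) /
            ((Fintype.card V).factorial : ℝ) *
          (f (insert i C) - f C)) :
    (∀ X : Finset V, ∑ i ∈ X, phi i ≤ f X) ∧ ∑ i, phi i = f Finset.univ := by
  classical
  have hNfac : Fintype.card (Fin (Fintype.card V) ≃ V) = (Fintype.card V).factorial := by
    rw [Fintype.card_equiv (Fintype.equivOfCardEq (by simp))]
    simp
  have hfacpos : (0 : ℝ) < ((Fintype.card V).factorial : ℝ) :=
    Nat.cast_pos.mpr (Nat.factorial_pos _)
  have key : ∀ i, phi i =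
      (∑ π : Fin (Fintype.card V) ≃ V, ShapleyAux.marg f π i) /
        ((Fintype.card V).factorial : ℝ) := by
    intro i
    rw [hphi i, ShapleyAux.sum_perm f i, Finset.sum_div]
    apply Finset.sum_congr rfl
    intro C _
    rw [div_mul_eq_mul_div]
  constructor
  · intro X
    have hswap : ∑ i ∈ X, phi i =
        (∑ π : Fin (Fintype.card V) ≃ V, ∑ i ∈ X, ShapleyAux.marg f π i) /
          ((Fintype.card V).factorial : ℝ) := by
      simp only [key]
      rw [← Finset.sum_div, Finset.sum_comm]
    rw [hswap, div_le_iff₀ hfacpos]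
    have hb : ∀ π ∈ (univ : Finset (Fin (Fintype.card V) ≃ V)),
        ∑ i ∈ X, ShapleyAux.marg f π i ≤ f X :=
      fun π _ => ShapleyAux.sum_marg_le f hf0 hsub π X
    calc ∑ π : Fin (Fintype.card V) ≃ V, ∑ i ∈ X, ShapleyAux.marg f π i
        ≤ (univ : Finset (Fin (Fintype.card V) ≃ V)).card • f X :=
          Finset.sum_le_card_nsmul _ _ _ hb
      _ = f X * ((Fintype.card V).factorial : ℝ) := by
          rw [Finset.card_univ, hNfac, nsmul_eq_mul]; ring
  · have h1 : ∀ π ∈ (univ : Finset (Fin (Fintype.card V) ≃ V)),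
        ∑ i, ShapleyAux.marg f π i = f univ := by
      intro π _
      rw [ShapleyAux.sum_marg f π, hf0, sub_zero]
    simp only [key]
    rw [← Finset.sum_div, Finset.sum_comm, Finset.sum_congr rfl h1, Finset.sum_const,
      Finset.card_univ, hNfac, nsmul_eq_mul]
    field_simp
end

section
/- Let f : 2^V → ℝ be submodular with f(∅)=0 and w ∈ ℝ_{>0}^V, and let r* be the minimizer of Σ_i r_i²/w_i over B(f). If S is the maximal minimizer of X ↦ f(X) − (f(V)/w(V))·w(X) and S ≠ V, then r*_i ≥ (f(S)/w(S))·w_i for every i ∈ V ∖ S. -/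
open Finset

set_option linter.unusedVariables false
set_option linter.unusedSectionVars false

section AuxRateLB
variable {V : Type*} [Fintype V] [DecidableEq V]

private lemma tight_union_inter_aux (f : Finset V → ℝ)
    (hsub : ∀ X Y : Finset V, f (X ∪ Y) + f (X ∩ Y) ≤ f X + f Y)
    (r : V → ℝ) (hfeas : ∀ X : Finset V, ∑ i ∈ X, r i ≤ f X)
    (A B : Finset V) (hA : ∑ i ∈ A, r i = f A) (hB : ∑ i ∈ B, r i = f B) :
    (∑ i ∈ A ∪ B, r i = f (A ∪ B)) ∧ (∑ i ∈ A ∩ B, r i = f (A ∩ B)) := by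
  have h1 := hfeas (A ∪ B)
  have h2 := hfeas (A ∩ B)
  have h3 := hsub A B
  have h4 : ∑ i ∈ A ∪ B, r i + ∑ i ∈ A ∩ B, r i = ∑ i ∈ A, r i + ∑ i ∈ B, r i :=
    Finset.sum_union_inter
  constructor <;> linarith

private lemma exchange_tight_aux (f : Finset V → ℝ)
    (w : V → ℝ) (hw : ∀ i, 0 < w i)
    (r : V → ℝ)
    (hfeas : ∀ X : Finset V, ∑ i ∈ X, r i ≤ f X)
    (hbase : ∑ i, r i = f Finset.univ)
    (hrmin : ∀ s : V → ℝ,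
      ((∀ X : Finset V, ∑ i ∈ X, s i ≤ f X) ∧ ∑ i, s i = f Finset.univ) →
      ∑ i, (r i) ^ 2 / w i ≤ ∑ i, (s i) ^ 2 / w i)
    (i j : V) (hij : r j * w i < r i * w j) :
    ∃ T : Finset V, j ∈ T ∧ i ∉ T ∧ ∑ t ∈ T, r t = f T := by
  by_contra hcon
  push_neg at hcon
  have hne : i ≠ j := by rintro rfl; exact absurd hij (lt_irrefl _)
  have hwi := hw i
  have hwj := hw j
  -- collection of bad sets
  set 𝒮 : Finset (Finset V) := Finset.univ.filter (fun T => j ∈ T ∧ i ∉ T) with h𝒮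
  have hSne : 𝒮.Nonempty := ⟨{j}, by simp [h𝒮, hne]⟩
  have hmem : ∀ T ∈ 𝒮, j ∈ T ∧ i ∉ T := by
    intro T hT; simpa [h𝒮] using hT
  set ε₀ : ℝ := 𝒮.inf' hSne (fun T => f T - ∑ t ∈ T, r t) with hε₀
  have hε₀pos : 0 < ε₀ := by
    rw [hε₀, Finset.lt_inf'_iff]
    intro T hT
    obtain ⟨hjT, hiT⟩ := hmem T hT
    linarith [lt_of_le_of_ne (hfeas T) (hcon T hjT hiT)]
  have hgap : r j / w j < r i / w i := by
    rw [div_lt_div_iff₀ hwj hwi]; linarith [hij]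
  set gap : ℝ := r i / w i - r j / w j with hgapdef
  have hgappos : 0 < gap := by simp [hgapdef]; linarith
  set c : ℝ := 1 / w i + 1 / w j with hc
  have hcpos : 0 < c := by positivity
  set ε : ℝ := min ε₀ (gap / c) with hεdef
  have hεpos : 0 < ε := lt_min hε₀pos (by positivity)
  have hεc : ε * c ≤ gap := by
    have : ε ≤ gap / c := min_le_right _ _
    calc ε * c ≤ (gap / c) * c := mul_le_mul_of_nonneg_right this hcpos.le
    _ = gap := by field_simp
  set s : V → ℝ := fun t => if t = j then r t + ε else if t = i then r t - ε else r t with hs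
  have hsum : ∀ X : Finset V, ∑ t ∈ X, s t
      = ∑ t ∈ X, r t + (if j ∈ X then ε else 0) - (if i ∈ X then ε else 0) := by
    intro X
    have : ∀ t ∈ X, s t = r t + (if t = j then ε else 0) - (if t = i then ε else 0) := by
      intro t _
      by_cases h1 : t = j
      · subst h1; simp [hs, Ne.symm hne, hne]
      · by_cases h2 : t = i
        · subst h2; simp [hs, hne, h1]
        · simp [hs, h1, h2]
    rw [Finset.sum_congr rfl this]
    rw [Finset.sum_sub_distrib, Finset.sum_add_distrib]
    rw [Finset.sum_ite_eq' X j (fun _ => ε), Finset.sum_ite_eq' X i (fun _ => ε)]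
  have hsfeas : ∀ X : Finset V, ∑ t ∈ X, s t ≤ f X := by
    intro X
    rw [hsum X]
    by_cases hjX : j ∈ X <;> by_cases hiX : i ∈ X <;> simp [hjX, hiX]
    · linarith [hfeas X]
    · -- the bad case: j ∈ X, i ∉ X, so X ∈ 𝒮
      have hX𝒮 : X ∈ 𝒮 := by simp [h𝒮, hjX, hiX]
      have : ε₀ ≤ f X - ∑ t ∈ X, r t := by
        rw [hε₀]; exact Finset.inf'_le _ hX𝒮
      have : ε ≤ f X - ∑ t ∈ X, r t := le_trans (min_le_left _ _) this
      linarith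
    · linarith [hfeas X, hεpos]
    · exact hfeas X
  have hsbase : ∑ t, s t = f Finset.univ := by
    rw [hsum Finset.univ]; simp [hbase]
  have hobj := hrmin s ⟨hsfeas, hsbase⟩
  -- compute the objective difference
  have hdiff : ∑ t, (s t) ^ 2 / w t - ∑ t, (r t) ^ 2 / w t
      = ((s i) ^ 2 - (r i) ^ 2) / w i + ((s j) ^ 2 - (r j) ^ 2) / w j := by
    rw [← Finset.sum_sub_distrib]
    rw [show (∑ t, ((s t) ^ 2 / w t - (r t) ^ 2 / w t))
        = ∑ t ∈ ({i, j} : Finset V), ((s t) ^ 2 / w t - (r t) ^ 2 / w t) from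
      (Finset.sum_subset (Finset.subset_univ _) (by
        intro t _ ht
        simp only [Finset.mem_insert, Finset.mem_singleton, not_or] at ht
        have : s t = r t := by simp [hs, ht.1, ht.2]
        rw [this]; ring)).symm]
    rw [Finset.sum_pair hne]
    simp only [div_sub_div_same]
  have hsi : s i = r i - ε := by simp [hs, hne]
  have hsj : s j = r j + ε := by simp [hs]
  have hneg : ((s i) ^ 2 - (r i) ^ 2) / w i + ((s j) ^ 2 - (r j) ^ 2) / w j < 0 := by
    rw [hsi, hsj]
    have hexp : ((r i - ε) ^ 2 - (r i) ^ 2) / w i + ((r j + ε) ^ 2 - (r j) ^ 2) / w j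
        = ε * (ε * c - 2 * gap) := by
      rw [hc, hgapdef]; field_simp; ring
    rw [hexp]
    have : ε * c - 2 * gap < 0 := by linarith
    nlinarith
  linarith

private lemma exists_tight_subset_aux (f : Finset V → ℝ) (r : V → ℝ)
    (hsub : ∀ X Y : Finset V, f (X ∪ Y) + f (X ∩ Y) ≤ f X + f Y)
    (hfeas : ∀ X : Finset V, ∑ i ∈ X, r i ≤ f X)
    (hbase : ∑ t, r t = f Finset.univ)
    (U : Finset V) (j : V) (hjU : j ∈ U)
    (hex : ∀ i ∉ U, ∃ T : Finset V, j ∈ T ∧ i ∉ T ∧ ∑ t ∈ T, r t = f T) :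
    ∃ T : Finset V, j ∈ T ∧ T ⊆ U ∧ ∑ t ∈ T, r t = f T := by
  suffices h : ∀ n (T : Finset V), (T \ U).card ≤ n → j ∈ T → (∑ t ∈ T, r t = f T) →
      ∃ T' : Finset V, j ∈ T' ∧ T' ⊆ U ∧ ∑ t ∈ T', r t = f T' by
    exact h (Finset.univ \ U).card Finset.univ le_rfl (Finset.mem_univ j) hbase
  intro n
  induction n with
  | zero =>
    intro T hc hj ht
    have : T ⊆ U := by
      rw [← Finset.sdiff_eq_empty_iff_subset]
      exact Finset.card_eq_zero.mp (Nat.le_zero.mp hc)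
    exact ⟨T, hj, this, ht⟩
  | succ n ih =>
    intro T hc hj ht
    by_cases hTU : T ⊆ U
    · exact ⟨T, hj, hTU, ht⟩
    · obtain ⟨i, hiT, hiU⟩ := Finset.not_subset.mp hTU
      obtain ⟨T', hjT', hiT', ht'⟩ := hex i hiU
      have htight := (tight_union_inter_aux f hsub r hfeas T T' ht ht').2
      refine ih (T ∩ T') ?_ (Finset.mem_inter.mpr ⟨hj, hjT'⟩) htight
      have hsub1 : (T ∩ T') \ U ⊆ (T \ U).erase i := by
        intro x hx
        rw [Finset.mem_sdiff, Finset.mem_inter] at hx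
        rw [Finset.mem_erase, Finset.mem_sdiff]
        exact ⟨fun h => hiT' (h ▸ hx.1.2), hx.1.1, hx.2⟩
      have h1 := Finset.card_le_card hsub1
      have h2 : ((T \ U).erase i).card = (T \ U).card - 1 :=
        Finset.card_erase_of_mem (Finset.mem_sdiff.mpr ⟨hiT, hiU⟩)
      have h3 : 1 ≤ (T \ U).card :=
        Finset.card_pos.mpr ⟨i, Finset.mem_sdiff.mpr ⟨hiT, hiU⟩⟩
      omega

private lemma tight_of_pieces_aux (f : Finset V → ℝ) (r : V → ℝ) (hf0 : f ∅ = 0)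
    (hsub : ∀ X Y : Finset V, f (X ∪ Y) + f (X ∩ Y) ≤ f X + f Y)
    (hfeas : ∀ X : Finset V, ∑ i ∈ X, r i ≤ f X)
    (U : Finset V)
    (hU : ∀ j ∈ U, ∃ T : Finset V, j ∈ T ∧ T ⊆ U ∧ ∑ t ∈ T, r t = f T) :
    ∑ t ∈ U, r t = f U := by
  suffices h : ∀ n (W : Finset V), W ⊆ U → (∑ t ∈ W, r t = f W) → (U \ W).card ≤ n →
      ∑ t ∈ U, r t = f U by
    exact h (U \ ∅).card ∅ (Finset.empty_subset U) (by simp [hf0]) le_rfl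
  intro n
  induction n with
  | zero =>
    intro W hWU hW hc
    have : U ⊆ W := by
      rw [← Finset.sdiff_eq_empty_iff_subset]
      exact Finset.card_eq_zero.mp (Nat.le_zero.mp hc)
    have : W = U := Finset.Subset.antisymm hWU this
    rwa [this] at hW
  | succ n ih =>
    intro W hWU hW hc
    by_cases hUW : U ⊆ W
    · have : W = U := Finset.Subset.antisymm hWU hUW
      rwa [this] at hW
    · obtain ⟨j, hjU, hjW⟩ := Finset.not_subset.mp hUW
      obtain ⟨T, hjT, hTU, hT⟩ := hU j hjU
      have htight := (tight_union_inter_aux f hsub r hfeas W T hW hT).1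
      refine ih (W ∪ T) (Finset.union_subset hWU hTU) htight ?_
      have hsub1 : U \ (W ∪ T) ⊆ (U \ W).erase j := by
        intro x hx
        rw [Finset.mem_sdiff, Finset.mem_union, not_or] at hx
        rw [Finset.mem_erase, Finset.mem_sdiff]
        exact ⟨fun h => hx.2.2 (h ▸ hjT), hx.1, hx.2.1⟩
      have h1 := Finset.card_le_card hsub1
      have h2 : ((U \ W).erase j).card = (U \ W).card - 1 :=
        Finset.card_erase_of_mem (Finset.mem_sdiff.mpr ⟨hjU, hjW⟩)
      have h3 : 1 ≤ (U \ W).card :=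
        Finset.card_pos.mpr ⟨j, Finset.mem_sdiff.mpr ⟨hjU, hjW⟩⟩
      omega

end AuxRateLB

/-- If `r*` minimizes `∑ i, r i ^ 2 / w i` over `B(f)` and `S ≠ V` is the
maximal minimizer of `X ↦ f(X) − (f(V)/w(V)) w(X)`, then
`r*_i ≥ (f(S)/w(S)) w_i` for every `i ∈ V ∖ S`. -/
theorem rate_lower_bound_outside_first_critical_set
    {V : Type*} [Fintype V] [DecidableEq V] [Nonempty V]
    (f : Finset V → ℝ) (hf0 : f ∅ = 0)
    (hsub : ∀ X Y : Finset V, f (X ∪ Y) + f (X ∩ Y) ≤ f X + f Y)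
    (w : V → ℝ) (hw : ∀ i, 0 < w i)
    (rstar : V → ℝ)
    (hrB : (∀ X : Finset V, ∑ i ∈ X, rstar i ≤ f X) ∧ ∑ i, rstar i = f Finset.univ)
    (hrmin : ∀ s : V → ℝ,
      ((∀ X : Finset V, ∑ i ∈ X, s i ≤ f X) ∧ ∑ i, s i = f Finset.univ) →
      ∑ i, (rstar i) ^ 2 / w i ≤ ∑ i, (s i) ^ 2 / w i)
    (S : Finset V)
    (hSmin : IsMinimizer
      (fun X => f X - (f Finset.univ / ∑ i, w i) * ∑ i ∈ X, w i) S)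
    (hSmax : ∀ X, IsMinimizer
      (fun X => f X - (f Finset.univ / ∑ i, w i) * ∑ i ∈ X, w i) X → X ⊆ S)
    (hSne : S ≠ Finset.univ) :
    ∀ i ∉ S, (f S / ∑ i ∈ S, w i) * w i ≤ rstar i := by
  obtain ⟨hfeas, hbase⟩ := hrB
  set lv : ℝ := f Finset.univ / ∑ i, w i with hlv
  have hwV : (0:ℝ) < ∑ i, w i :=
    Finset.sum_pos (fun i _ => hw i) Finset.univ_nonempty
  have hlvV : lv * ∑ i, w i = f Finset.univ := by
    rw [hlv]; field_simp
  -- g S < 0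
  have hgS0 : f S - lv * ∑ i ∈ S, w i ≤ 0 := by
    have := hSmin ∅
    simpa [hf0] using this
  have hgSlt : f S - lv * ∑ i ∈ S, w i < 0 := by
    rcases lt_or_eq_of_le hgS0 with h | h
    · exact h
    · exfalso
      apply hSne
      apply Finset.Subset.antisymm (Finset.subset_univ S)
      apply hSmax Finset.univ
      intro Z
      have hZ := hSmin Z
      simp only
      rw [hlvV]
      simp only at hZ
      linarith
  have hSnonempty : S.Nonempty := by
    rcases Finset.eq_empty_or_nonempty S with h | h
    · exfalso; rw [h] at hgSlt; simp [hf0] at hgSlt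
    · exact h
  have hwS : (0:ℝ) < ∑ i ∈ S, w i := Finset.sum_pos (fun i _ => hw i) hSnonempty
  intro i₀ hi₀S
  by_contra hlt
  push_neg at hlt
  -- the level set U
  set U : Finset V := Finset.univ.filter
      (fun t => rstar t * ∑ i ∈ S, w i < f S * w t) with hU
  have hmemU : ∀ t, t ∈ U ↔ rstar t * ∑ i ∈ S, w i < f S * w t := by
    intro t; simp [hU]
  have hi₀U : i₀ ∈ U := by
    rw [hmemU]
    have : (f S / ∑ i ∈ S, w i) * w i₀ * (∑ i ∈ S, w i) = f S * w i₀ := by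
      field_simp
    nlinarith [hlt, hwS]
  -- every element of U is strictly below lv * w t
  have hUlt : ∀ t ∈ U, rstar t < lv * w t := by
    intro t ht
    rw [hmemU] at ht
    have h1 : f S * w t < lv * (∑ i ∈ S, w i) * w t := by
      nlinarith [hw t, hgSlt]
    have h2 : rstar t * ∑ i ∈ S, w i < lv * (∑ i ∈ S, w i) * w t := lt_trans ht h1
    nlinarith [hwS]
  -- U is tight
  have hUtight : ∑ t ∈ U, rstar t = f U := by
    apply tight_of_pieces_aux f rstar hf0 hsub hfeas
    intro j hjU
    apply exists_tight_subset_aux f rstar hsub hfeas hbase U j hjU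
    intro i hiU
    apply exchange_tight_aux f w hw rstar hfeas hbase hrmin
    rw [hmemU] at hjU
    rw [hmemU] at hiU
    push_neg at hiU
    have h1 : rstar j * (∑ i ∈ S, w i) * w i < f S * w j * w i := by
      nlinarith [hw i]
    have h2 : f S * w i * w j ≤ rstar i * (∑ i ∈ S, w i) * w j := by
      nlinarith [hw j]
    nlinarith [hwS]
  -- final contradiction
  have hsplit : ∑ t ∈ U ∩ S, rstar t + ∑ t ∈ U \ S, rstar t = ∑ t ∈ U, rstar t :=
    Finset.sum_inter_add_sum_sdiff U S rstar
  have hwsplit : ∑ t ∈ U ∩ S, w t + ∑ t ∈ U \ S, w t = ∑ t ∈ U, w t :=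
    Finset.sum_inter_add_sum_sdiff U S w
  have hA_le : ∑ t ∈ U ∩ S, rstar t ≤ f (U ∩ S) := hfeas (U ∩ S)
  have hdiff_lt : ∑ t ∈ U \ S, rstar t < lv * ∑ t ∈ U \ S, w t := by
    rw [Finset.mul_sum]
    apply Finset.sum_lt_sum_of_nonempty
    · exact ⟨i₀, Finset.mem_sdiff.mpr ⟨hi₀U, hi₀S⟩⟩
    · intro t ht
      exact hUlt t (Finset.mem_sdiff.mp ht).1
  have hmin := hSmin (S ∪ U)
  simp only at hmin
  have hsubSU := hsub S U
  have hwuni : ∑ t ∈ S ∪ U, w t + ∑ t ∈ S ∩ U, w t = ∑ t ∈ S, w t + ∑ t ∈ U, w t :=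
    Finset.sum_union_inter
  have hIC : S ∩ U = U ∩ S := Finset.inter_comm S U
  rw [hIC] at hsubSU hwuni
  have e1 : lv * ∑ t ∈ S ∪ U, w t + lv * ∑ t ∈ U ∩ S, w t
      = lv * ∑ t ∈ S, w t + lv * ∑ t ∈ U, w t := by linear_combination lv * hwuni
  have e2 : lv * ∑ t ∈ U ∩ S, w t + lv * ∑ t ∈ U \ S, w t = lv * ∑ t ∈ U, w t := by
    linear_combination lv * hwsplit
  linarith [hmin, hsubSU, hA_le, hdiff_lt, hsplit, hUtight, e1, e2]
end
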